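/- Fix α ≥ 1 and L > 0. There exists a constant K > 0 depending only on α and L (independent of d, n, and the points) such that the following holds for every integer d ≥ 1 and all points x_1, …, x_n ∈ ℝ^d in general position. Let ψ : ℝ^d → [0,1] be a differentiable L-Lipschitz function with ψ(y) = 1 whenever ‖y‖ ≤ 15 and ψ(y) = 0 whenever ‖y‖ ≥ 16, and define ŝ : ℝ^d → ℝ^d by: ŝ(x) = −ψ(100(x − x_i)/√d)·α(x − x_i) − (1 − ψ(100(x − x_i)/√d))·x whenever ‖x − x_i‖ ≤ 0.16√d for some (necessarily unique) index i, and ŝ(x) = −x whenever ‖x − x_i‖ ≥ 0.16√d for all i. Then ŝ is well-defined and K-Lipschitz on all of ℝ^d. -/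
import Mathlib


/-- Points `x 1, …, x n ∈ ℝ^d` are in general position if `‖x i − x j‖ ≥ 0.4√d` for all
`i ≠ j`, and `0.5√d ≤ ‖x i‖ ≤ 2√d` for all `i`. -/
def GeneralPosition {d n : ℕ} (x : Fin n → EuclideanSpace ℝ (Fin d)) : Prop :=
  (∀ i j, i ≠ j → 0.4 * Real.sqrt d ≤ ‖x i - x j‖) ∧
  (∀ i, 0.5 * Real.sqrt d ≤ ‖x i‖ ∧ ‖x i‖ ≤ 2 * Real.sqrt d)

set_option maxHeartbeats 1000000 in
/-- the data-based-initialization score estimate is well-defined (it exists) and is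
`K`-Lipschitz with `K` depending only on `α` and `L`. -/
theorem stmt4 (α L : ℝ) (hα : 1 ≤ α) (hL : 0 < L) :
    ∃ K > (0 : ℝ),
      ∀ d : ℕ, 1 ≤ d →
      ∀ n : ℕ, ∀ x : Fin n → EuclideanSpace ℝ (Fin d), GeneralPosition x →
      ∀ ψ : EuclideanSpace ℝ (Fin d) → ℝ,
        Differentiable ℝ ψ →
        (∀ a b, |ψ a - ψ b| ≤ L * ‖a - b‖) →
        (∀ y, ψ y ∈ Set.Icc (0 : ℝ) 1) →
        (∀ y, ‖y‖ ≤ 15 → ψ y = 1) →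
        (∀ y, 16 ≤ ‖y‖ → ψ y = 0) →
        -- well-definedness: a map satisfying the two defining clauses exists …
        (∃ sHat : EuclideanSpace ℝ (Fin d) → EuclideanSpace ℝ (Fin d),
          (∀ y, ∀ i, ‖y - x i‖ ≤ 0.16 * Real.sqrt d →
            sHat y = -(ψ ((100 / Real.sqrt d) • (y - x i)) • (α • (y - x i)))
              - (1 - ψ ((100 / Real.sqrt d) • (y - x i))) • y) ∧
          (∀ y, (∀ i, 0.16 * Real.sqrt d ≤ ‖y - x i‖) → sHat y = -y)) ∧
        -- … and any such map is `K`-Lipschitz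
        (∀ sHat : EuclideanSpace ℝ (Fin d) → EuclideanSpace ℝ (Fin d),
          (∀ y, ∀ i, ‖y - x i‖ ≤ 0.16 * Real.sqrt d →
            sHat y = -(ψ ((100 / Real.sqrt d) • (y - x i)) • (α • (y - x i)))
              - (1 - ψ ((100 / Real.sqrt d) • (y - x i))) • y) →
          (∀ y, (∀ i, 0.16 * Real.sqrt d ≤ ‖y - x i‖) → sHat y = -y) →
          ∀ a b : EuclideanSpace ℝ (Fin d), ‖sHat a - sHat b‖ ≤ K * ‖a - b‖) := by
  classical
  refine ⟨α * (1 + 16 * L) + 1 + 216 * L, by nlinarith, ?_⟩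
  intro d hd n x hx ψ hψdiff hψlip hψ01 hψ1 hψ0
  set K : ℝ := α * (1 + 16 * L) + 1 + 216 * L with hKdef
  have hK1 : (1:ℝ) ≤ K := by nlinarith
  have hdr : (1:ℝ) ≤ Real.sqrt d := by
    rw [show (1:ℝ) = Real.sqrt 1 by simp]
    exact Real.sqrt_le_sqrt (by exact_mod_cast hd)
  have hs0 : (0:ℝ) < Real.sqrt d := lt_of_lt_of_le one_pos hdr
  set r : ℝ := 0.16 * Real.sqrt d with hrdef
  have hr0 : (0:ℝ) < r := by rw [hrdef]; positivity
  have huniq : ∀ (y : EuclideanSpace ℝ (Fin d)) i j, ‖y - x i‖ ≤ r → ‖y - x j‖ ≤ r → i = j := by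
    intro y i j hi hj
    by_contra hij
    have h40 := hx.1 i j hij
    have tri : dist (x i) (x j) ≤ dist (x i) y + dist y (x j) := dist_triangle _ _ _
    simp only [dist_eq_norm] at tri
    rw [norm_sub_rev (x i) y] at tri
    rw [hrdef] at hi hj
    nlinarith [hs0]
  have hψr : ∀ v : EuclideanSpace ℝ (Fin d), r ≤ ‖v‖ → ψ ((100 / Real.sqrt d) • v) = 0 := by
    intro v hv
    apply hψ0
    rw [norm_smul, Real.norm_eq_abs, abs_of_pos (by positivity)]
    rw [div_mul_eq_mul_div, le_div_iff₀ hs0]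
    rw [hrdef] at hv
    nlinarith [hs0]
  constructor
  · refine ⟨fun y => if h : ∃ i, ‖y - x i‖ ≤ r then
      (-(ψ ((100 / Real.sqrt d) • (y - x h.choose)) • (α • (y - x h.choose)))
        - (1 - ψ ((100 / Real.sqrt d) • (y - x h.choose))) • y) else -y, ?_, ?_⟩
    · intro y i hi
      have hex : ∃ i, ‖y - x i‖ ≤ r := ⟨i, hi⟩
      simp only [dif_pos hex]
      rw [huniq y hex.choose i hex.choose_spec hi]
    · intro y hy
      by_cases h : ∃ i, ‖y - x i‖ ≤ r
      · simp only [dif_pos h]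
        rw [hψr _ (hy h.choose)]
        simp
      · simp only [dif_neg h]
  · intro sHat h1 h2
    -- on the boundary sphere, sHat y = -y
    have hbd : ∀ (y : EuclideanSpace ℝ (Fin d)) (i : Fin n), ‖y - x i‖ = r → sHat y = -y := by
      intro y i hy
      rw [h1 y i hy.le, hψr _ hy.ge]
      simp
    -- local Lipschitz bound inside a ball
    have hloc : ∀ (i : Fin n) (a b : EuclideanSpace ℝ (Fin d)), ‖a - x i‖ ≤ r → ‖b - x i‖ ≤ r →
        ‖sHat a - sHat b‖ ≤ K * ‖a - b‖ := by
      intro i a b ha hb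
      rw [h1 a i ha, h1 b i hb]
      set c : ℝ := 100 / Real.sqrt d with hc
      have hc0 : (0:ℝ) < c := div_pos (by norm_num) hs0
      set ψa := ψ (c • (a - x i)) with hψa
      set ψb := ψ (c • (b - x i)) with hψb
      have key : (-(ψa • (α • (a - x i))) - (1 - ψa) • a) - (-(ψb • (α • (b - x i))) - (1 - ψb) • b)
          = -(α • (ψa • (a - b) + (ψa - ψb) • (b - x i)))
            - ((1 - ψa) • (a - b) + (ψb - ψa) • b) := by
        module
      rw [key]
      have hab0 : (0:ℝ) ≤ ‖a - b‖ := norm_nonneg _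
      have h01a := hψ01 (c • (a - x i))
      have h01b := hψ01 (c • (b - x i))
      rw [Set.mem_Icc] at h01a h01b
      have hdiff : |ψa - ψb| ≤ L * (c * ‖a - b‖) := by
        have h := hψlip (c • (a - x i)) (c • (b - x i))
        have he : c • (a - x i) - c • (b - x i) = c • (a - b) := by module
        rw [he, norm_smul, Real.norm_eq_abs, abs_of_pos hc0] at h
        exact h
      have hcr : c * r = 16 := by
        rw [hc, hrdef]; field_simp; ring
      have hbnorm : ‖b‖ ≤ 2 * Real.sqrt d + r := by
        have h2i := (hx.2 i).2
        calc ‖b‖ = ‖(b - x i) + x i‖ := by rw [sub_add_cancel]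
          _ ≤ ‖b - x i‖ + ‖x i‖ := norm_add_le _ _
          _ ≤ r + 2 * Real.sqrt d := add_le_add hb h2i
          _ = 2 * Real.sqrt d + r := by ring
      have hcb : c * (2 * Real.sqrt d + r) = 216 := by
        rw [hc, hrdef]; field_simp; ring
      have bound1 : ‖ψa • (a - b) + (ψa - ψb) • (b - x i)‖ ≤ (1 + 16 * L) * ‖a - b‖ := by
        have e1 : ‖ψa • (a - b) + (ψa - ψb) • (b - x i)‖
            ≤ |ψa| * ‖a - b‖ + |ψa - ψb| * ‖b - x i‖ := by
          refine (norm_add_le _ _).trans ?_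
          rw [norm_smul, norm_smul, Real.norm_eq_abs, Real.norm_eq_abs]
        have e2 : |ψa| * ‖a - b‖ ≤ 1 * ‖a - b‖ := by
          apply mul_le_mul_of_nonneg_right _ hab0
          rw [abs_le]; constructor <;> linarith [h01a.1, h01a.2]
        have e3 : |ψa - ψb| * ‖b - x i‖ ≤ (L * (c * ‖a - b‖)) * r :=
          mul_le_mul hdiff hb (norm_nonneg _) (by positivity)
        have e4 : (L * (c * ‖a - b‖)) * r = 16 * L * ‖a - b‖ := by
          rw [show L * (c * ‖a - b‖) * r = L * ‖a - b‖ * (c * r) by ring, hcr]; ring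
        calc ‖ψa • (a - b) + (ψa - ψb) • (b - x i)‖
            ≤ |ψa| * ‖a - b‖ + |ψa - ψb| * ‖b - x i‖ := e1
          _ ≤ 1 * ‖a - b‖ + 16 * L * ‖a - b‖ := by rw [e4] at e3; linarith
          _ = (1 + 16 * L) * ‖a - b‖ := by ring
      have bound2 : ‖(1 - ψa) • (a - b) + (ψb - ψa) • b‖ ≤ (1 + 216 * L) * ‖a - b‖ := by
        have e1 : ‖(1 - ψa) • (a - b) + (ψb - ψa) • b‖
            ≤ |1 - ψa| * ‖a - b‖ + |ψb - ψa| * ‖b‖ := by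
          refine (norm_add_le _ _).trans ?_
          rw [norm_smul, norm_smul, Real.norm_eq_abs, Real.norm_eq_abs]
        have e2 : |1 - ψa| * ‖a - b‖ ≤ 1 * ‖a - b‖ := by
          apply mul_le_mul_of_nonneg_right _ hab0
          rw [abs_le]; constructor <;> linarith [h01a.1, h01a.2]
        have e3 : |ψb - ψa| * ‖b‖ ≤ (L * (c * ‖a - b‖)) * (2 * Real.sqrt d + r) := by
          rw [abs_sub_comm]
          exact mul_le_mul hdiff hbnorm (norm_nonneg _) (by positivity)
        have e4 : (L * (c * ‖a - b‖)) * (2 * Real.sqrt d + r) = 216 * L * ‖a - b‖ := by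
          rw [show L * (c * ‖a - b‖) * (2 * Real.sqrt d + r)
            = L * ‖a - b‖ * (c * (2 * Real.sqrt d + r)) by ring, hcb]; ring
        calc ‖(1 - ψa) • (a - b) + (ψb - ψa) • b‖
            ≤ |1 - ψa| * ‖a - b‖ + |ψb - ψa| * ‖b‖ := e1
          _ ≤ 1 * ‖a - b‖ + 216 * L * ‖a - b‖ := by rw [e4] at e3; linarith
          _ = (1 + 216 * L) * ‖a - b‖ := by ring
      calc ‖-(α • (ψa • (a - b) + (ψa - ψb) • (b - x i)))
            - ((1 - ψa) • (a - b) + (ψb - ψa) • b)‖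
          ≤ ‖α • (ψa • (a - b) + (ψa - ψb) • (b - x i))‖
            + ‖(1 - ψa) • (a - b) + (ψb - ψa) • b‖ := by
            refine (norm_sub_le _ _).trans ?_
            rw [norm_neg]
        _ = α * ‖ψa • (a - b) + (ψa - ψb) • (b - x i)‖
            + ‖(1 - ψa) • (a - b) + (ψb - ψa) • b‖ := by
            rw [norm_smul, Real.norm_eq_abs, abs_of_pos (lt_of_lt_of_le one_pos hα)]
        _ ≤ α * ((1 + 16 * L) * ‖a - b‖) + (1 + 216 * L) * ‖a - b‖ := by
            have := mul_le_mul_of_nonneg_left bound1 (le_trans zero_le_one hα)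
            linarith
        _ = K * ‖a - b‖ := by rw [hKdef]; ring
    -- if p is outside (or on the boundary of) all balls, the bound holds for any b
    have hout : ∀ (p b : EuclideanSpace ℝ (Fin d)), (∀ j, r ≤ ‖p - x j‖) →
        ‖sHat p - sHat b‖ ≤ K * ‖p - b‖ := by
      intro p b hp
      have hsp : sHat p = -p := by
        by_cases h : ∃ j, ‖p - x j‖ ≤ r
        · obtain ⟨j, hj⟩ := h
          exact hbd p j (le_antisymm hj (hp j))
        · exact h2 p hp
      by_cases hbb : ∃ j, ‖b - x j‖ ≤ r
      · obtain ⟨j, hj⟩ := hbb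
        have hcont : ContinuousOn (fun t : ℝ => ‖(p + t • (b - p)) - x j‖) (Set.Icc 0 1) := by
          apply Continuous.continuousOn
          exact (((continuous_const.add (continuous_id.smul continuous_const)).sub
            continuous_const).norm)
        have hf0 : ‖(p + (0:ℝ) • (b - p)) - x j‖ = ‖p - x j‖ := by
          rw [zero_smul, add_zero]
        have hf1 : ‖(p + (1:ℝ) • (b - p)) - x j‖ = ‖b - x j‖ := by
          rw [one_smul, add_sub_cancel]
        have hmem : r ∈ Set.Icc ‖(p + (1:ℝ) • (b - p)) - x j‖ ‖(p + (0:ℝ) • (b - p)) - x j‖ := by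
          rw [hf0, hf1]; exact ⟨hj, hp j⟩
        obtain ⟨t, ht, hq⟩ := intermediate_value_Icc' (zero_le_one) hcont hmem
        set q := p + t • (b - p) with hqdef
        have hsq : sHat q = -q := hbd q j hq
        have hqp : ‖p - q‖ = t * ‖b - p‖ := by
          rw [show p - q = -(t • (b - p)) by rw [hqdef]; module, norm_neg, norm_smul,
            Real.norm_eq_abs, abs_of_nonneg ht.1]
        have hqb : ‖q - b‖ = (1 - t) * ‖b - p‖ := by
          rw [show q - b = -((1 - t) • (b - p)) by rw [hqdef]; module, norm_neg, norm_smul,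
            Real.norm_eq_abs, abs_of_nonneg (by linarith [ht.2])]
        have hqball : ‖q - x j‖ ≤ r := hq.le
        have step2 : ‖sHat q - sHat b‖ ≤ K * ‖q - b‖ := hloc j q b hqball hj
        have tri : ‖sHat p - sHat b‖ ≤ ‖sHat p - sHat q‖ + ‖sHat q - sHat b‖ := by
          have := dist_triangle (sHat p) (sHat q) (sHat b)
          simpa [dist_eq_norm] using this
        have step1 : ‖sHat p - sHat q‖ = ‖p - q‖ := by
          rw [hsp, hsq, show -p - -q = -(p - q) by module, norm_neg]
        have hpb : ‖p - b‖ = ‖b - p‖ := norm_sub_rev _ _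
        have hnn : (0:ℝ) ≤ ‖b - p‖ := norm_nonneg _
        calc ‖sHat p - sHat b‖ ≤ ‖p - q‖ + K * ‖q - b‖ := by
              rw [step1] at tri; linarith
          _ = t * ‖b - p‖ + K * ((1 - t) * ‖b - p‖) := by rw [hqp, hqb]
          _ ≤ K * ‖p - b‖ := by
              rw [hpb]
              nlinarith [mul_nonneg (mul_nonneg (sub_nonneg.mpr hK1) ht.1) hnn]
      · push_neg at hbb
        have hsb : sHat b = -b := h2 b (fun j => (hbb j).le)
        rw [hsp, hsb, show -p - -b = -(p - b) by module, norm_neg]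
        exact le_mul_of_one_le_left (norm_nonneg _) hK1
    -- main argument
    intro a b
    by_cases hA : ∃ i, ‖a - x i‖ ≤ r
    · obtain ⟨i, hi⟩ := hA
      by_cases hB : ‖b - x i‖ ≤ r
      · exact hloc i a b hi hB
      · push_neg at hB
        have hcont : ContinuousOn (fun t : ℝ => ‖(a + t • (b - a)) - x i‖) (Set.Icc 0 1) := by
          apply Continuous.continuousOn
          exact (((continuous_const.add (continuous_id.smul continuous_const)).sub
            continuous_const).norm)
        have hf0 : ‖(a + (0:ℝ) • (b - a)) - x i‖ = ‖a - x i‖ := by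
          rw [zero_smul, add_zero]
        have hf1 : ‖(a + (1:ℝ) • (b - a)) - x i‖ = ‖b - x i‖ := by
          rw [one_smul, add_sub_cancel]
        have hmem : r ∈ Set.Icc ‖(a + (0:ℝ) • (b - a)) - x i‖ ‖(a + (1:ℝ) • (b - a)) - x i‖ := by
          rw [hf0, hf1]; exact ⟨hi, hB.le⟩
        obtain ⟨t, ht, hq⟩ := intermediate_value_Icc (zero_le_one) hcont hmem
        set p := a + t • (b - a) with hpdef
        have hpall : ∀ j, r ≤ ‖p - x j‖ := by
          intro j
          by_cases hji : j = i
          · subst hji; exact hq.ge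
          · have h40 := hx.1 i j (fun h => hji h.symm)
            have tri : dist (x i) (x j) ≤ dist (x i) p + dist p (x j) := dist_triangle _ _ _
            simp only [dist_eq_norm] at tri
            rw [norm_sub_rev (x i) p] at tri
            have hpi : ‖p - x i‖ = r := hq
            rw [hrdef] at hpi ⊢
            nlinarith [hs0]
        have hap : ‖a - p‖ = t * ‖b - a‖ := by
          rw [show a - p = -(t • (b - a)) by rw [hpdef]; module, norm_neg, norm_smul,
            Real.norm_eq_abs, abs_of_nonneg ht.1]
        have hpb : ‖p - b‖ = (1 - t) * ‖b - a‖ := by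
          rw [show p - b = -((1 - t) • (b - a)) by rw [hpdef]; module, norm_neg, norm_smul,
            Real.norm_eq_abs, abs_of_nonneg (by linarith [ht.2])]
        have step1 : ‖sHat a - sHat p‖ ≤ K * ‖a - p‖ := hloc i a p hi hq.le
        have step2 : ‖sHat p - sHat b‖ ≤ K * ‖p - b‖ := hout p b hpall
        have tri : ‖sHat a - sHat b‖ ≤ ‖sHat a - sHat p‖ + ‖sHat p - sHat b‖ := by
          have := dist_triangle (sHat a) (sHat p) (sHat b)
          simpa [dist_eq_norm] using this
        have hab : ‖a - b‖ = ‖b - a‖ := norm_sub_rev _ _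
        calc ‖sHat a - sHat b‖ ≤ K * ‖a - p‖ + K * ‖p - b‖ := by linarith
          _ = K * ‖a - b‖ := by rw [hap, hpb, hab]; ring
    · push_neg at hA
      exact hout a b (fun i => (hA i).le)
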